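/- arXiv:2010.08204 — 6 statements merged into one kernel-verified Lean document; each statement's English description precedes it below -/
import Mathlib

section
/- Let h be a continuously differentiable real function, suppose there exists a > 0 such that h(a) > 0, and suppose h satisfies: h'(x) ≤ 0 whenever h(x) > 0. Then h(x) ≥ h(a) for all x ≤ a. -/
/-! Continuous induction leftwards from `a`: the set `{u | h a ≤ h u}` is closed, and at each of
its points `h` is positive, hence locally antitone, so the set also contains a left neighbourhood. -/

open Set Filter Topology

theorem eventually_nhdsLT_apply_ge_of_deriv_nonpos_of_pos {h : ℝ → ℝ} (hd : Differentiable ℝ h)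
    (hder : ∀ x, 0 < h x → deriv h x ≤ 0) {t : ℝ} (ht : 0 < h t) :
    ∀ᶠ u in 𝓝[<] t, h t ≤ h u := by
  have hpos : ∀ᶠ u in 𝓝[≤] t, 0 < h u :=
    nhdsWithin_le_nhds (continuousAt_const.eventually_lt hd.continuous.continuousAt ht)
  obtain ⟨l, hlt, hl⟩ := mem_nhdsLE_iff_exists_Ioc_subset.mp hpos
  have hanti : AntitoneOn h (Ioc l t) := by
    refine antitoneOn_of_deriv_nonpos (convex_Ioc l t) hd.continuous.continuousOn
      hd.differentiableOn fun u hu ↦ hder u (hl ?_)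
    rw [interior_Ioc] at hu
    exact Ioo_subset_Ioc_self hu
  filter_upwards [Ioo_mem_nhdsLT hlt] with u hu
  exact hanti (Ioo_subset_Ioc_self hu) (right_mem_Ioc.mpr hlt) hu.2.le

theorem apply_le_of_le_of_deriv_nonpos_of_pos {h : ℝ → ℝ} (hd : Differentiable ℝ h)
    (hder : ∀ x, 0 < h x → deriv h x ≤ 0) {x y : ℝ} (hxy : x ≤ y) (hy : 0 < h y) :
    h y ≤ h x := by
  let s := {u | h y ≤ h u}
  have hs : IsClosed (s ∩ Icc x y) :=
    (isClosed_le continuous_const hd.continuous).inter isClosed_Icc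
  refine hs.Icc_subset_of_forall_exists_lt (le_refl (h y)) ?_ ⟨le_rfl, hxy⟩
  rintro t ⟨hyt, -⟩ u hut
  have hge := eventually_nhdsLT_apply_ge_of_deriv_nonpos_of_pos hd hder (hy.trans_le hyt)
  obtain ⟨v, hv, hvu⟩ := (hge.and (Ico_mem_nhdsLT hut)).exists
  exact ⟨v, hyt.trans hv, hvu⟩

theorem stmt_0_general (h : ℝ → ℝ) (hC1 : ContDiff ℝ 1 h) (a : ℝ)
    (hha : 0 < h a) (hder : ∀ x : ℝ, 0 < h x → deriv h x ≤ 0) :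
    ∀ x : ℝ, x ≤ a → h a ≤ h x := fun _ hxa ↦
  apply_le_of_le_of_deriv_nonpos_of_pos (hC1.differentiable one_ne_zero) hder hxa hha

theorem stmt_0 (h : ℝ → ℝ) (hC1 : ContDiff ℝ 1 h) (a : ℝ) (ha : 0 < a)
    (hha : 0 < h a) (hder : ∀ x : ℝ, 0 < h x → deriv h x ≤ 0) :
    ∀ x : ℝ, x ≤ a → h a ≤ h x :=
  stmt_0_general h hC1 a hha hder
end

section
/- With the notation of the previous statement, if additionally M = σ/c_R > 1 (entropy condition for a 3-shock), then ρ > ρ_R, p > p_R, and 0 < u < σ. -/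
theorem stmt_8 (γ ρ_R p_R σ ρ u p c_R M : ℝ)
    (hγ : 1 < γ) (hρR : 0 < ρ_R) (hpR : 0 < p_R)
    (hcR : c_R ^ 2 = γ * p_R / ρ_R) (hcRpos : 0 < c_R)
    (hM : M = σ / c_R) (hM1 : 1 < M)
    (hρ : ρ = ((γ + 1) / (γ - 1 + 2 / M ^ 2)) * ρ_R)
    (hu : u = (1 - ρ_R / ρ) * σ)
    (hp : p = p_R + (1 - ρ_R / ρ) * ρ_R * σ ^ 2) :
    ρ_R < ρ ∧ p_R < p ∧ 0 < u ∧ u < σ := by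
  have hM0 : (0:ℝ) < M := by linarith
  have hM2 : 1 < M ^ 2 := by nlinarith
  have hM2pos : (0:ℝ) < M ^ 2 := by positivity
  have h2 : (0:ℝ) < 2 / M ^ 2 := by positivity
  have hd : 0 < γ - 1 + 2 / M ^ 2 := by linarith
  have hdlt : γ - 1 + 2 / M ^ 2 < γ + 1 := by
    have : 2 / M ^ 2 < 2 := by
      rw [div_lt_iff₀ hM2pos]; nlinarith
    linarith
  have hσ : σ = M * c_R := by
    rw [hM]; field_simp
  have hσpos : 0 < σ := by rw [hσ]; positivity
  have hratio : 1 < (γ + 1) / (γ - 1 + 2 / M ^ 2) := by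
    rw [lt_div_iff₀ hd]; linarith
  have hρgt : ρ_R < ρ := by
    rw [hρ]; nlinarith
  have hρpos : 0 < ρ := lt_trans hρR hρgt
  have hr1 : ρ_R / ρ < 1 := (div_lt_one hρpos).2 hρgt
  have hr0 : 0 < ρ_R / ρ := by positivity
  refine ⟨hρgt, ?_, ?_, ?_⟩
  · rw [hp]
    nlinarith [mul_pos (mul_pos (by linarith : (0:ℝ) < 1 - ρ_R / ρ) hρR) (pow_pos hσpos 2)]
  · rw [hu]; nlinarith
  · rw [hu]; nlinarith
end

section
/- Let ρ, u : [σ_ℓ, σ_p] → ℝ be differentiable and satisfy the ODE system ρ'(x) = −2u(x)(u(x)−x) ρ(x) / ( x ((u(x)−x)² − c(x)²) ) and u'(x) = 2 c(x)² u(x) / ( x ((u(x)−x)² − c(x)²) ), with c(x)² = γ s₁ ρ(x)^{γ−1}, γ > 1, s₁ > 0. Assume 0 ≤ u(x) ≤ x and ρ(x) ≥ 0 on [σ_ℓ, σ_p] with σ_ℓ > 0, and boundary values u(σ_p) = u₁ > 0, ρ(σ_p) = ρ₁ > 0 with u₁ + c(σ_p) − σ_p > 0. Then ρ and u are decreasing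 on [σ_ℓ, σ_p], and ρ(x) ≥ ρ₁ > 0, u(x) ≥ u₁ > 0 for all x in [σ_ℓ, σ_p]. -/
/-!
Where the flow is subsonic, `x - u < c`, the common denominator `x ((u - x)² - c²)` is negative,
so `ρ' ≤ 0` and `u' ≤ 0`. Moving leftwards from `σ_p`, `ρ` and `u` therefore increase, hence so
does `c`, while `x - u` strictly decreases. Thus `c + u - x`, positive at `σ_p` by the Lax
condition, cannot reach zero, and the flow is subsonic on the whole interval. Monotonicity and
the lower bounds follow; strictness comes from `u > 0`, `ρ > 0` and `u < x` inside the interval.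
-/

open Set

theorem forall_pos_of_forall_Ioc_pos {α : Type*} [ConditionallyCompleteLinearOrder α]
    [TopologicalSpace α] [OrderTopology α] {F : α → ℝ} {a b : α}
    (hF : ContinuousOn F (Icc a b)) (hb : 0 < F b)
    (hstep : ∀ m ∈ Ico a b, (∀ x ∈ Ioc m b, 0 < F x) → 0 < F m) :
    ∀ x ∈ Icc a b, 0 < F x := by
  by_contra! hbad
  have hK : IsCompact (Icc a b ∩ F ⁻¹' Iic 0) :=
    isCompact_Icc.of_isClosed_subset
      (hF.preimage_isClosed_of_isClosed isClosed_Icc isClosed_Iic) inter_subset_left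
  obtain ⟨m, ⟨hm, hFm⟩, hmax⟩ := hK.exists_isGreatest hbad
  have hmb : m < b := hm.2.lt_of_ne (by rintro rfl; exact (lt_of_lt_of_le hb hFm).false)
  refine (hstep m ⟨hm.1, hmb⟩ fun x hx => ?_).not_ge hFm
  by_contra! hFx
  exact hx.1.not_ge (hmax ⟨⟨hm.1.trans hx.1.le, hx.2⟩, hFx⟩)

theorem antitoneOn_Icc_of_hasDerivAt_nonpos {f f' : ℝ → ℝ} {a b : ℝ}
    (hf : ∀ x ∈ Icc a b, HasDerivAt f (f' x) x) (hf' : ∀ x ∈ Ioo a b, f' x ≤ 0) :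
    AntitoneOn f (Icc a b) :=
  antitoneOn_of_hasDerivWithinAt_nonpos (convex_Icc a b)
    (fun x hx => (hf x hx).continuousAt.continuousWithinAt)
    (fun x hx => (hf x (interior_subset hx)).hasDerivWithinAt)
    (by rwa [interior_Icc])

theorem strictAntiOn_Icc_of_hasDerivAt_neg {f f' : ℝ → ℝ} {a b : ℝ}
    (hf : ∀ x ∈ Icc a b, HasDerivAt f (f' x) x) (hf' : ∀ x ∈ Ioo a b, f' x < 0) :
    StrictAntiOn f (Icc a b) :=
  strictAntiOn_of_hasDerivWithinAt_neg (convex_Icc a b)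
    (fun x hx => (hf x hx).continuousAt.continuousWithinAt)
    (fun x hx => (hf x (interior_subset hx)).hasDerivWithinAt)
    (by rwa [interior_Icc])

theorem mul_sq_sub_sq_neg_of_sub_lt {x v w : ℝ} (hx : 0 < x) (hvx : v ≤ x) (hsub : x - v < w) :
    x * ((v - x) ^ 2 - w ^ 2) < 0 :=
  mul_neg_of_pos_of_neg hx (by nlinarith)

structure SelfSimilarFlow (γ s₁ : ℝ) (ρ u c : ℝ → ℝ) (s : Set ℝ) : Prop where
  soundSpeed : ∀ x ∈ s, 0 ≤ c x ∧ c x ^ 2 = γ * s₁ * ρ x ^ (γ - 1)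
  hasDerivAt_density : ∀ x ∈ s, HasDerivAt ρ
    (-(2 * u x * (u x - x) * ρ x) / (x * ((u x - x) ^ 2 - c x ^ 2))) x
  hasDerivAt_velocity : ∀ x ∈ s, HasDerivAt u
    (2 * c x ^ 2 * u x / (x * ((u x - x) ^ 2 - c x ^ 2))) x
  bounds : ∀ x ∈ s, 0 ≤ u x ∧ u x ≤ x ∧ 0 ≤ ρ x

namespace SelfSimilarFlow

variable {γ s₁ a b : ℝ} {ρ u c : ℝ → ℝ} {s : Set ℝ}

theorem mono {t : Set ℝ} (h : SelfSimilarFlow γ s₁ ρ u c s) (hts : t ⊆ s) :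
    SelfSimilarFlow γ s₁ ρ u c t :=
  ⟨fun x hx => h.soundSpeed x (hts hx), fun x hx => h.hasDerivAt_density x (hts hx),
    fun x hx => h.hasDerivAt_velocity x (hts hx), fun x hx => h.bounds x (hts hx)⟩

theorem continuousOn_density (h : SelfSimilarFlow γ s₁ ρ u c s) : ContinuousOn ρ s :=
  fun x hx => (h.hasDerivAt_density x hx).continuousAt.continuousWithinAt

theorem continuousOn_velocity (h : SelfSimilarFlow γ s₁ ρ u c s) : ContinuousOn u s :=
  fun x hx => (h.hasDerivAt_velocity x hx).continuousAt.continuousWithinAt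

theorem continuousOn_soundSpeed (h : SelfSimilarFlow γ s₁ ρ u c s) (hγ : 1 ≤ γ) :
    ContinuousOn c s := by
  have hsqrt : ContinuousOn (fun x => √(γ * s₁ * ρ x ^ (γ - 1))) s :=
    Real.continuous_sqrt.comp_continuousOn
      (continuousOn_const.mul (h.continuousOn_density.rpow_const fun _ _ => Or.inr (by linarith)))
  refine hsqrt.congr fun x hx => ?_
  dsimp only
  rw [← (h.soundSpeed x hx).2, Real.sqrt_sq (h.soundSpeed x hx).1]

theorem soundSpeed_le_of_density_le (h : SelfSimilarFlow γ s₁ ρ u c s) (hγ : 1 ≤ γ)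
    (hs₁ : 0 ≤ s₁) {x y : ℝ} (hx : x ∈ s) (hy : y ∈ s) (hρ : ρ x ≤ ρ y) : c x ≤ c y := by
  rw [← pow_le_pow_iff_left₀ (h.soundSpeed x hx).1 (h.soundSpeed y hy).1 two_ne_zero,
    (h.soundSpeed x hx).2, (h.soundSpeed y hy).2]
  exact mul_le_mul_of_nonneg_left (Real.rpow_le_rpow (h.bounds x hx).2.2 hρ (by linarith))
    (mul_nonneg (by linarith) hs₁)

theorem velocity_slope_nonpos (h : SelfSimilarFlow γ s₁ ρ u c (Icc a b)) (ha : 0 < a)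
    (hsub : ∀ x ∈ Ioo a b, x - u x < c x) :
    ∀ x ∈ Ioo a b, 2 * c x ^ 2 * u x / (x * ((u x - x) ^ 2 - c x ^ 2)) ≤ 0 := fun x hx => by
  obtain ⟨hu, hux, -⟩ := h.bounds x (Ioo_subset_Icc_self hx)
  exact div_nonpos_of_nonneg_of_nonpos (by positivity)
    (mul_sq_sub_sq_neg_of_sub_lt (ha.trans hx.1) hux (hsub x hx)).le

theorem antitoneOn_velocity (h : SelfSimilarFlow γ s₁ ρ u c (Icc a b)) (ha : 0 < a)
    (hsub : ∀ x ∈ Ioo a b, x - u x < c x) : AntitoneOn u (Icc a b) :=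
  antitoneOn_Icc_of_hasDerivAt_nonpos h.hasDerivAt_velocity (h.velocity_slope_nonpos ha hsub)

theorem strictAntiOn_velocity_sub_id (h : SelfSimilarFlow γ s₁ ρ u c (Icc a b)) (ha : 0 < a)
    (hsub : ∀ x ∈ Ioo a b, x - u x < c x) : StrictAntiOn (fun x => u x - x) (Icc a b) :=
  strictAntiOn_Icc_of_hasDerivAt_neg
    (fun x hx => (h.hasDerivAt_velocity x hx).sub (hasDerivAt_id' x))
    (fun x hx => by linarith [h.velocity_slope_nonpos ha hsub x hx])

theorem antitoneOn_density (h : SelfSimilarFlow γ s₁ ρ u c (Icc a b)) (ha : 0 < a)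
    (hsub : ∀ x ∈ Ioo a b, x - u x < c x) : AntitoneOn ρ (Icc a b) :=
  antitoneOn_Icc_of_hasDerivAt_nonpos h.hasDerivAt_density fun x hx => by
    obtain ⟨hu, hux, hρ⟩ := h.bounds x (Ioo_subset_Icc_self hx)
    have hnum : 0 ≤ u x * (x - u x) * ρ x := by have := sub_nonneg.2 hux; positivity
    exact div_nonpos_of_nonneg_of_nonpos (by linarith)
      (mul_sq_sub_sq_neg_of_sub_lt (ha.trans hx.1) hux (hsub x hx)).le

theorem strictAntiOn_velocity (h : SelfSimilarFlow γ s₁ ρ u c (Icc a b)) (ha : 0 < a)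
    (hu : ∀ x ∈ Ioo a b, 0 < u x) (hux : ∀ x ∈ Ioo a b, u x < x)
    (hsub : ∀ x ∈ Ioo a b, x - u x < c x) : StrictAntiOn u (Icc a b) :=
  strictAntiOn_Icc_of_hasDerivAt_neg h.hasDerivAt_velocity fun x hx => by
    have hc : 0 < c x := by linarith [hux x hx, hsub x hx]
    have := hu x hx
    exact div_neg_of_pos_of_neg (by positivity)
      (mul_sq_sub_sq_neg_of_sub_lt (ha.trans hx.1) (hux x hx).le (hsub x hx))

theorem strictAntiOn_density (h : SelfSimilarFlow γ s₁ ρ u c (Icc a b)) (ha : 0 < a)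
    (hu : ∀ x ∈ Ioo a b, 0 < u x) (hux : ∀ x ∈ Ioo a b, u x < x) (hρ : ∀ x ∈ Ioo a b, 0 < ρ x)
    (hsub : ∀ x ∈ Ioo a b, x - u x < c x) : StrictAntiOn ρ (Icc a b) :=
  strictAntiOn_Icc_of_hasDerivAt_neg h.hasDerivAt_density fun x hx => by
    have hnum : 0 < u x * (x - u x) * ρ x := by
      have := hu x hx; have := sub_pos.2 (hux x hx); have := hρ x hx; positivity
    exact div_neg_of_pos_of_neg (by linarith)
      (mul_sq_sub_sq_neg_of_sub_lt (ha.trans hx.1) (hux x hx).le (hsub x hx))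

theorem sub_lt_soundSpeed_left (h : SelfSimilarFlow γ s₁ ρ u c (Icc a b)) (hγ : 1 ≤ γ)
    (hs₁ : 0 ≤ s₁) (ha : 0 < a) (hab : a < b) (hsub : ∀ x ∈ Ioo a b, x - u x < c x)
    (hb : b - u b < c b) : a - u a < c a := by
  have ha' : a ∈ Icc a b := left_mem_Icc.2 hab.le
  have hb' : b ∈ Icc a b := right_mem_Icc.2 hab.le
  have hc : c b ≤ c a :=
    h.soundSpeed_le_of_density_le hγ hs₁ hb' ha' (h.antitoneOn_density ha hsub ha' hb' hab.le)
  have hgap : u b - b < u a - a := h.strictAntiOn_velocity_sub_id ha hsub ha' hb' hab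
  linarith

theorem sub_lt_soundSpeed (h : SelfSimilarFlow γ s₁ ρ u c (Icc a b)) (hγ : 1 ≤ γ)
    (hs₁ : 0 ≤ s₁) (ha : 0 < a) (hb : b - u b < c b) : ∀ x ∈ Icc a b, x - u x < c x := by
  have hcont : ContinuousOn (fun x => c x + u x - x) (Icc a b) :=
    ((h.continuousOn_soundSpeed hγ).add h.continuousOn_velocity).sub continuousOn_id
  have hpos := forall_pos_of_forall_Ioc_pos hcont (by linarith) fun m hm hright => by
    have hleft := (h.mono (Icc_subset_Icc_left hm.1)).sub_lt_soundSpeed_left hγ hs₁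
      (ha.trans_le hm.1) hm.2 (fun x hx => by linarith [hright x (Ioo_subset_Ioc_self hx)]) hb
    linarith
  exact fun x hx => by linarith [hpos x hx]

end SelfSimilarFlow

open Set in
theorem stmt_12 (γ s₁ σ_ℓ σ_p ρ₁ u₁ : ℝ) (ρ u c : ℝ → ℝ)
    (hγ : 1 < γ) (hs₁ : 0 < s₁) (hσℓ : 0 < σ_ℓ) (hσ : σ_ℓ < σ_p)
    (hc : ∀ x ∈ Icc σ_ℓ σ_p, 0 ≤ c x ∧ c x ^ 2 = γ * s₁ * ρ x ^ (γ - 1))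
    (hρ' : ∀ x ∈ Icc σ_ℓ σ_p, HasDerivAt ρ
      (-(2 * u x * (u x - x) * ρ x) / (x * ((u x - x) ^ 2 - c x ^ 2))) x)
    (hu' : ∀ x ∈ Icc σ_ℓ σ_p, HasDerivAt u
      (2 * c x ^ 2 * u x / (x * ((u x - x) ^ 2 - c x ^ 2))) x)
    (hbounds : ∀ x ∈ Icc σ_ℓ σ_p, 0 ≤ u x ∧ u x ≤ x ∧ 0 ≤ ρ x)
    (hup : u σ_p = u₁) (hρp : ρ σ_p = ρ₁) (hu₁ : 0 < u₁) (hρ₁ : 0 < ρ₁)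
    (hLax : 0 < u₁ + c σ_p - σ_p) :
    StrictAntiOn ρ (Icc σ_ℓ σ_p) ∧ StrictAntiOn u (Icc σ_ℓ σ_p) ∧
    ∀ x ∈ Icc σ_ℓ σ_p, ρ₁ ≤ ρ x ∧ u₁ ≤ u x := by
  have hflow : SelfSimilarFlow γ s₁ ρ u c (Icc σ_ℓ σ_p) := ⟨hc, hρ', hu', hbounds⟩
  have hℓ : σ_ℓ ∈ Icc σ_ℓ σ_p := left_mem_Icc.2 hσ.le
  have hp : σ_p ∈ Icc σ_ℓ σ_p := right_mem_Icc.2 hσ.le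
  have hsub : ∀ x ∈ Ioo σ_ℓ σ_p, x - u x < c x := fun x hx =>
    hflow.sub_lt_soundSpeed hγ.le hs₁.le hσℓ (by rw [hup]; linarith) x (Ioo_subset_Icc_self hx)
  have hlower : ∀ x ∈ Icc σ_ℓ σ_p, ρ₁ ≤ ρ x ∧ u₁ ≤ u x := fun x hx =>
    ⟨hρp ▸ hflow.antitoneOn_density hσℓ hsub hx hp hx.2,
      hup ▸ hflow.antitoneOn_velocity hσℓ hsub hx hp hx.2⟩
  have hu : ∀ x ∈ Ioo σ_ℓ σ_p, 0 < u x := fun x hx =>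
    hu₁.trans_le (hlower x (Ioo_subset_Icc_self hx)).2
  have hρ : ∀ x ∈ Ioo σ_ℓ σ_p, 0 < ρ x := fun x hx =>
    hρ₁.trans_le (hlower x (Ioo_subset_Icc_self hx)).1
  have hux : ∀ x ∈ Ioo σ_ℓ σ_p, u x < x := fun x hx => by
    have := hflow.strictAntiOn_velocity_sub_id hσℓ hsub hℓ (Ioo_subset_Icc_self hx) hx.1
    linarith [(hbounds σ_ℓ hℓ).2.1]
  exact ⟨hflow.strictAntiOn_density hσℓ hu hux hρ hsub,
    hflow.strictAntiOn_velocity hσℓ hu hux hsub, hlower⟩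
end

section
/- Under the hypotheses of the previous statement, the function h(x) = u(x) + c(x) − x satisfies h(x) ≥ h(σ_p) > 0 on [σ_ℓ, σ_p]; consequently (u(x)−x)² − c(x)² < 0 on the whole interval, i.e., the denominator of the ODE system never vanishes there. -/
/-!
Write `h = u + c - x`. Since `0 ≤ u ≤ x` and `c ≥ 0`, the denominator `(u - x)² - c²` is negative
exactly where `h > 0`. Wherever that holds, the ODE gives
`u' + c' = u c (2c - (γ - 1)(u - x)) / (x ((u - x)² - c²)) ≤ 0`, so `h` is decreasing there.
A continuity argument run backwards from `σ_p`, where `h > 0`, shows that `h` never drops to `0`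
on `[σ_ℓ, σ_p]`, hence `h ≥ h(σ_p)` throughout.
-/

open Set Filter Topology

theorem antitoneOn_Icc_of_hasDerivAt_nonpos_s13 {h : ℝ → ℝ} {a b : ℝ}
    (hcont : ContinuousOn h (Icc a b)) (hderiv : ∀ x ∈ Ioo a b, ∃ d ≤ 0, HasDerivAt h d x) :
    AntitoneOn h (Icc a b) := by
  rw [← interior_Icc] at hderiv
  refine antitoneOn_of_deriv_nonpos (convex_Icc a b) hcont
    (fun x hx => ?_) (fun x hx => ?_) <;> obtain ⟨d, hd, hdx⟩ := hderiv x hx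
  · exact hdx.differentiableAt.differentiableWithinAt
  · exact hdx.deriv ▸ hd

theorem apply_right_le_of_hasDerivAt_nonpos_of_pos {h : ℝ → ℝ} {a b : ℝ}
    (hcont : ContinuousOn h (Icc a b)) (hb : 0 < h b)
    (hderiv : ∀ x ∈ Ioo a b, 0 < h x → ∃ d ≤ 0, HasDerivAt h d x) :
    ∀ x ∈ Icc a b, h b ≤ h x := by
  have antitone : ∀ s ∈ Icc a b, (∀ x ∈ Ioo s b, 0 < h x) → AntitoneOn h (Icc s b) :=
    fun s hs hpos => antitoneOn_Icc_of_hasDerivAt_nonpos_s13 (hcont.mono (Icc_subset_Icc_left hs.1))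
      fun x hx => hderiv x ⟨hs.1.trans_lt hx.1, hx.2⟩ (hpos x hx)
  have pos : ∀ x ∈ Icc a b, 0 < h x := by
    by_contra! hbad
    obtain ⟨x₀, hx₀, hx₀h⟩ := hbad
    set B := Icc a b ∩ h ⁻¹' Iic 0
    have hB : IsCompact B := isCompact_Icc.of_isClosed_subset
      (hcont.preimage_isClosed_of_isClosed isClosed_Icc isClosed_Iic) inter_subset_left
    set t := sSup B
    have htB : t ∈ B := hB.sSup_mem ⟨x₀, hx₀, hx₀h⟩
    have ht0 : h t ≤ 0 := htB.2
    have htb : t < b := htB.1.2.lt_of_ne fun e => by rw [e] at ht0; linarith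
    have above : ∀ x ∈ Ioo t b, 0 < h x := fun x hx => by
      by_contra! hx0
      exact (le_csSup hB.bddAbove ⟨⟨htB.1.1.trans hx.1.le, hx.2.le⟩, hx0⟩).not_gt hx.1
    have := antitone t htB.1 above (left_mem_Icc.2 htb.le) (right_mem_Icc.2 htb.le) htb.le
    linarith
  intro x hx
  exact antitone a (left_mem_Icc.2 (hx.1.trans hx.2)) (fun y hy => pos y (Ioo_subset_Icc_self hy))
    hx (right_mem_Icc.2 (hx.1.trans hx.2)) hx.2

theorem sq_sub_sq_neg_iff_pos {u c x : ℝ} (hux : u ≤ x) (hc : 0 ≤ c) :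
    (u - x) ^ 2 - c ^ 2 < 0 ↔ 0 < u + c - x := by
  rw [sub_neg, ← neg_sq, neg_sub, sq_lt_sq₀ (sub_nonneg.2 hux) hc]
  constructor <;> intro <;> linarith

theorem ContinuousOn.of_sq_eq_mul_rpow {ρ c : ℝ → ℝ} {s : Set ℝ} {K p : ℝ} (hρ : ContinuousOn ρ s)
    (hp : 0 ≤ p) (hc : ∀ x ∈ s, 0 ≤ c x ∧ c x ^ 2 = K * ρ x ^ p) : ContinuousOn c s := by
  have hK : ContinuousOn (fun x => K * ρ x ^ p) s :=
    continuousOn_const.mul (hρ.rpow_const fun _ _ => Or.inr hp)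
  exact hK.sqrt.congr fun x hx => by dsimp only; rw [← (hc x hx).2, Real.sqrt_sq (hc x hx).1]

theorem HasDerivAt.of_sq_eq_mul_rpow {ρ c : ℝ → ℝ} {K p ρ' x : ℝ} (hρ : HasDerivAt ρ ρ' x)
    (hρx : ρ x ≠ 0) (hcx : c x ≠ 0) (hc : ∀ᶠ y in 𝓝 x, 0 ≤ c y ∧ c y ^ 2 = K * ρ y ^ p) :
    HasDerivAt c (p * c x * ρ' / (2 * ρ x)) x := by
  have hsqrt : c =ᶠ[𝓝 x] fun y => √(K * ρ y ^ p) :=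
    hc.mono fun y hy => by dsimp only; rw [← hy.2, Real.sqrt_sq hy.1]
  have hcK : c x ^ 2 = K * ρ x ^ p := hc.self_of_nhds.2
  have hd := ((hρ.rpow_const (Or.inl hρx)).const_mul K).sqrt (by rw [← hcK]; positivity)
  refine (hd.congr_of_eventuallyEq hsqrt).congr_deriv ?_
  rw [← hsqrt.eq_of_nhds, Real.rpow_sub_one hρx, mul_div_assoc', mul_div_assoc', ← mul_assoc,
    mul_comm K, mul_assoc, ← hcK]
  field_simp

theorem exists_hasDerivAt_nonpos_of_subsonic {γ K x : ℝ} {ρ u c : ℝ → ℝ} (hγ : 1 < γ)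
    (hx : 0 < x) (hc : ∀ᶠ y in 𝓝 x, 0 ≤ c y ∧ c y ^ 2 = K * ρ y ^ (γ - 1))
    (hρ' : HasDerivAt ρ (-(2 * u x * (u x - x) * ρ x) / (x * ((u x - x) ^ 2 - c x ^ 2))) x)
    (hu' : HasDerivAt u (2 * c x ^ 2 * u x / (x * ((u x - x) ^ 2 - c x ^ 2))) x)
    (hu : 0 ≤ u x) (hux : u x ≤ x) (hsub : (u x - x) ^ 2 - c x ^ 2 < 0) :
    ∃ d ≤ 0, HasDerivAt (fun y => u y + c y - y) d x := by
  obtain ⟨hc0, hcK⟩ := hc.self_of_nhds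
  set D := (u x - x) ^ 2 - c x ^ 2
  have hcx : 0 < c x := by nlinarith [sq_nonneg (u x - x)]
  have hρx : ρ x ≠ 0 := fun h0 => by
    rw [h0, Real.zero_rpow (by linarith), mul_zero] at hcK
    exact hcx.ne' (pow_eq_zero_iff two_ne_zero |>.1 hcK)
  refine ⟨_, ?_, (hu'.add (hρ'.of_sq_eq_mul_rpow hρx hcx.ne' hc)).sub (hasDerivAt_id x)⟩
  have hsum : 2 * c x ^ 2 * u x / (x * D) +
      (γ - 1) * c x * (-(2 * u x * (u x - x) * ρ x) / (x * D)) / (2 * ρ x) =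
      u x * c x * (2 * c x - (γ - 1) * (u x - x)) / (x * D) := by
    field_simp
    ring
  have hnum : 0 ≤ u x * c x * (2 * c x - (γ - 1) * (u x - x)) :=
    mul_nonneg (mul_nonneg hu hc0) (by nlinarith)
  have := div_nonpos_of_nonneg_of_nonpos hnum (mul_neg_of_pos_of_neg hx hsub).le
  linarith

open Set in
theorem stmt_13_general (γ s₁ σ_ℓ σ_p : ℝ) (ρ u c : ℝ → ℝ)
    (hγ : 1 < γ) (hσℓ : 0 < σ_ℓ)
    (hc : ∀ x ∈ Icc σ_ℓ σ_p, 0 ≤ c x ∧ c x ^ 2 = γ * s₁ * ρ x ^ (γ - 1))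
    (hρ' : ∀ x ∈ Icc σ_ℓ σ_p, HasDerivAt ρ
      (-(2 * u x * (u x - x) * ρ x) / (x * ((u x - x) ^ 2 - c x ^ 2))) x)
    (hu' : ∀ x ∈ Icc σ_ℓ σ_p, HasDerivAt u
      (2 * c x ^ 2 * u x / (x * ((u x - x) ^ 2 - c x ^ 2))) x)
    (hbounds : ∀ x ∈ Icc σ_ℓ σ_p, 0 ≤ u x ∧ u x ≤ x ∧ 0 ≤ ρ x)
    (hLax : 0 < u σ_p + c σ_p - σ_p) :
    ∀ x ∈ Icc σ_ℓ σ_p,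
      (u x + c x - x ≥ u σ_p + c σ_p - σ_p ∧ 0 < u σ_p + c σ_p - σ_p) ∧
      (u x - x) ^ 2 - c x ^ 2 < 0 := by
  have hsubsonic : ∀ y ∈ Icc σ_ℓ σ_p, (u y - y) ^ 2 - c y ^ 2 < 0 ↔ 0 < u y + c y - y :=
    fun y hy => sq_sub_sq_neg_iff_pos (hbounds y hy).2.1 (hc y hy).1
  have hu : ContinuousOn u (Icc σ_ℓ σ_p) := fun y hy => (hu' y hy).continuousAt.continuousWithinAt
  have hρ : ContinuousOn ρ (Icc σ_ℓ σ_p) := fun y hy => (hρ' y hy).continuousAt.continuousWithinAt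
  have hcont : ContinuousOn (fun y => u y + c y - y) (Icc σ_ℓ σ_p) :=
    (hu.add (hρ.of_sq_eq_mul_rpow (by linarith) hc)).sub continuousOn_id
  have hdecr : ∀ y ∈ Ioo σ_ℓ σ_p, 0 < u y + c y - y →
      ∃ d ≤ 0, HasDerivAt (fun y => u y + c y - y) d y := fun y hy hpos =>
    have hy' := Ioo_subset_Icc_self hy
    exists_hasDerivAt_nonpos_of_subsonic hγ (hσℓ.trans hy.1)
      (eventually_of_mem (Icc_mem_nhds hy.1 hy.2) hc) (hρ' y hy') (hu' y hy')
      (hbounds y hy').1 (hbounds y hy').2.1 ((hsubsonic y hy').2 hpos)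
  intro x hx
  have hmono := apply_right_le_of_hasDerivAt_nonpos_of_pos hcont hLax hdecr x hx
  exact ⟨⟨hmono, hLax⟩, (hsubsonic x hx).2 (hLax.trans_le hmono)⟩

open Set in
theorem stmt_13 (γ s₁ σ_ℓ σ_p : ℝ) (ρ u c : ℝ → ℝ)
    (hγ : 1 < γ) (hs₁ : 0 < s₁) (hσℓ : 0 < σ_ℓ) (hσ : σ_ℓ < σ_p)
    (hc : ∀ x ∈ Icc σ_ℓ σ_p, 0 ≤ c x ∧ c x ^ 2 = γ * s₁ * ρ x ^ (γ - 1))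
    (hρ' : ∀ x ∈ Icc σ_ℓ σ_p, HasDerivAt ρ
      (-(2 * u x * (u x - x) * ρ x) / (x * ((u x - x) ^ 2 - c x ^ 2))) x)
    (hu' : ∀ x ∈ Icc σ_ℓ σ_p, HasDerivAt u
      (2 * c x ^ 2 * u x / (x * ((u x - x) ^ 2 - c x ^ 2))) x)
    (hbounds : ∀ x ∈ Icc σ_ℓ σ_p, 0 ≤ u x ∧ u x ≤ x ∧ 0 ≤ ρ x)
    (hup : 0 < u σ_p) (hρp : 0 < ρ σ_p)
    (hLax : 0 < u σ_p + c σ_p - σ_p) :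
    ∀ x ∈ Icc σ_ℓ σ_p,
      (u x + c x - x ≥ u σ_p + c σ_p - σ_p ∧ 0 < u σ_p + c σ_p - σ_p) ∧
      (u x - x) ^ 2 - c x ^ 2 < 0 :=
  stmt_13_general γ s₁ σ_ℓ σ_p ρ u c hγ hσℓ hc hρ' hu' hbounds hLax
end

section
/- Let γ > 1 and let ρ, u : (σ_ℓ, σ_p) → ℝ be positive differentiable functions satisfying ρ'(x) = −2u(u−x)ρ/(x((u−x)²−c²)) and u' = 2c²u/(x((u−x)²−c²)) with c(x)² = γ s₁ ρ(x)^{γ−1}, s₁ > 0, and suppose u(x) + c(x) − x > 0 and 0 < u(x) < x on (σ_ℓ, σ_p). Define F_r(x) = ½u(x)² + x u(x)/(γ−1) − (γ/(γ−1)) (u(x)/(x−u(x))) c(x)²/γ + Q. Then F_r'(x) > 0 on (σ_ℓ, σ_p), i.e., F_r is strictly increasing. -/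
/-!
Write `s = x - u` and `D = (u - x)² - c²`. Along the flow, `(c²)' = (γ - 1) c² ρ'/ρ = 2(γ - 1) c² u s/(x D)`,
so the contribution `u u'` of the kinetic term cancels exactly against the part of the
derivative of `(u/s) c²/(γ - 1)` coming from `(c²)'`. What is left simplifies to
`F_r' = u (s² + 3c²)/((γ - 1) s²)`, which is positive since `u > 0` and `γ > 1`.
-/

/-- The function `F_r`, with `w` standing for `c²`. -/
noncomputable def Fr (γ Q : ℝ) (u w : ℝ → ℝ) (x : ℝ) : ℝ :=
  u x ^ 2 / 2 + x * u x / (γ - 1) - (γ / (γ - 1)) * (u x / (x - u x)) * (w x / γ) + Q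

lemma HasDerivAt.sq_of_eventuallyEq_rpow {ρ c : ℝ → ℝ} {ρ' K a x : ℝ}
    (hρ : HasDerivAt ρ ρ' x) (hρx : 0 < ρ x) (hc : ∀ᶠ y in nhds x, c y ^ 2 = K * ρ y ^ a) :
    HasDerivAt (fun y => c y ^ 2) (a * c x ^ 2 * ρ' / ρ x) x := by
  have hpow : HasDerivAt (fun y => K * ρ y ^ a) (K * (ρ' * a * ρ x ^ (a - 1))) x :=
    (hρ.rpow_const (Or.inl hρx.ne')).const_mul K
  have hcx : c x ^ 2 = K * ρ x ^ a := hc.self_of_nhds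
  refine (hpow.congr_of_eventuallyEq hc).congr_deriv ?_
  rw [hcx, Real.rpow_sub_one hρx.ne']
  ring

lemma hasDerivAt_Fr {γ Q x u' w' : ℝ} {u w : ℝ → ℝ} (hγ : γ ≠ 0)
    (hu : HasDerivAt u u' x) (hw : HasDerivAt w w' x) (hux : x - u x ≠ 0) :
    HasDerivAt (Fr γ Q u w)
      (u x * u' + (u x + x * u' - ((u' * x - u x) / (x - u x) ^ 2 * w x
        + u x / (x - u x) * w')) / (γ - 1)) x := by
  have hquot : HasDerivAt (fun y => u y / (y - u y)) ((u' * x - u x) / (x - u x) ^ 2) x :=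
    (hu.fun_div ((hasDerivAt_id' x).fun_sub hu) hux).congr_deriv (by ring)
  have hFr := (((hu.fun_pow 2).div_const 2).fun_add
    (((hasDerivAt_id' x).fun_mul hu).div_const (γ - 1))).fun_sub
    ((hquot.const_mul (γ / (γ - 1))).fun_mul (hw.div_const γ)) |>.add_const Q
  refine hFr.congr_deriv ?_
  field_simp
  ring

lemma Fr_deriv_eq {γ x u w ρ ρ' u' w' : ℝ} (hγ : γ - 1 ≠ 0) (hx : x ≠ 0) (hρ : ρ ≠ 0)
    (hs : x - u ≠ 0) (hD : (u - x) ^ 2 - w ≠ 0)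
    (hρ' : ρ' = -(2 * u * (u - x) * ρ) / (x * ((u - x) ^ 2 - w)))
    (hu' : u' = 2 * w * u / (x * ((u - x) ^ 2 - w)))
    (hw' : w' = (γ - 1) * w * ρ' / ρ) :
    u * u' + (u + x * u' - ((u' * x - u) / (x - u) ^ 2 * w + u / (x - u) * w')) / (γ - 1)
      = u * ((x - u) ^ 2 + 3 * w) / ((γ - 1) * (x - u) ^ 2) := by
  subst hw' hρ' hu'
  field_simp
  ring

lemma strictMonoOn_of_hasDerivAt_pos {D : Set ℝ} (hD : Convex ℝ D) (hDo : IsOpen D)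
    {f f' : ℝ → ℝ} (hf : ∀ x ∈ D, HasDerivAt f (f' x) x) (hf' : ∀ x ∈ D, 0 < f' x) :
    StrictMonoOn f D := by
  refine strictMonoOn_of_hasDerivWithinAt_pos (f' := f') hD (HasDerivAt.continuousOn hf) ?_ ?_ <;>
    rw [hDo.interior_eq]
  exacts [fun x hx => (hf x hx).hasDerivWithinAt, hf']

open Set in
theorem stmt_15_general (γ s₁ σ_ℓ σ_p Q : ℝ) (ρ u c : ℝ → ℝ)
    (hγ : 1 < γ)
    (hρpos : ∀ x ∈ Ioo σ_ℓ σ_p, 0 < ρ x)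
    (hc : ∀ x ∈ Ioo σ_ℓ σ_p, 0 ≤ c x ∧ c x ^ 2 = γ * s₁ * ρ x ^ (γ - 1))
    (hρ' : ∀ x ∈ Ioo σ_ℓ σ_p, HasDerivAt ρ
      (-(2 * u x * (u x - x) * ρ x) / (x * ((u x - x) ^ 2 - c x ^ 2))) x)
    (hu' : ∀ x ∈ Ioo σ_ℓ σ_p, HasDerivAt u
      (2 * c x ^ 2 * u x / (x * ((u x - x) ^ 2 - c x ^ 2))) x)
    (hbounds : ∀ x ∈ Ioo σ_ℓ σ_p, 0 < u x ∧ u x < x ∧ 0 < u x + c x - x) :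
    StrictMonoOn (fun x => u x ^ 2 / 2 + x * u x / (γ - 1)
      - (γ / (γ - 1)) * (u x / (x - u x)) * (c x ^ 2 / γ) + Q)
      (Ioo σ_ℓ σ_p) := by
  refine strictMonoOn_of_hasDerivAt_pos (f := Fr γ Q u fun y => c y ^ 2)
    (f' := fun x => u x * ((x - u x) ^ 2 + 3 * c x ^ 2) / ((γ - 1) * (x - u x) ^ 2))
    (convex_Ioo _ _) isOpen_Ioo (fun x hx => ?_) (fun x hx => ?_)
  · obtain ⟨hu, hux, hucx⟩ := hbounds x hx
    have hs : 0 < x - u x := by linarith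
    have hD : (u x - x) ^ 2 - c x ^ 2 < 0 := by nlinarith
    have hc2 := (hρ' x hx).sq_of_eventuallyEq_rpow (hρpos x hx)
      (Filter.eventually_of_mem (isOpen_Ioo.mem_nhds hx) fun y hy => (hc y hy).2)
    rw [← Fr_deriv_eq (by linarith) (by linarith) (hρpos x hx).ne' hs.ne' hD.ne rfl rfl rfl]
    exact hasDerivAt_Fr (by linarith) (hu' x hx) hc2 hs.ne'
  · obtain ⟨hu, hux, -⟩ := hbounds x hx
    have : 0 < γ - 1 := by linarith
    have : 0 < x - u x := by linarith
    positivity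

open Set in
theorem stmt_15 (γ s₁ σ_ℓ σ_p Q : ℝ) (ρ u c : ℝ → ℝ)
    (hγ : 1 < γ) (hs₁ : 0 < s₁) (hσℓ : 0 < σ_ℓ) (hσ : σ_ℓ < σ_p)
    (hρpos : ∀ x ∈ Ioo σ_ℓ σ_p, 0 < ρ x)
    (hc : ∀ x ∈ Ioo σ_ℓ σ_p, 0 ≤ c x ∧ c x ^ 2 = γ * s₁ * ρ x ^ (γ - 1))
    (hρ' : ∀ x ∈ Ioo σ_ℓ σ_p, HasDerivAt ρ
      (-(2 * u x * (u x - x) * ρ x) / (x * ((u x - x) ^ 2 - c x ^ 2))) x)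
    (hu' : ∀ x ∈ Ioo σ_ℓ σ_p, HasDerivAt u
      (2 * c x ^ 2 * u x / (x * ((u x - x) ^ 2 - c x ^ 2))) x)
    (hbounds : ∀ x ∈ Ioo σ_ℓ σ_p, 0 < u x ∧ u x < x ∧ 0 < u x + c x - x) :
    StrictMonoOn (fun x => u x ^ 2 / 2 + x * u x / (γ - 1)
      - (γ / (γ - 1)) * (u x / (x - u x)) * (c x ^ 2 / γ) + Q)
      (Ioo σ_ℓ σ_p) :=
  stmt_15_general γ s₁ σ_ℓ σ_p Q ρ u c hγ hρpos hc hρ' hu' hbounds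
end

section
/- For the explicit Euler scheme uⁿ = uⁿ⁺¹ − δx · 2(cⁿ⁺¹)² uⁿ⁺¹ / ( xⁿ⁺¹ ((uⁿ⁺¹−xⁿ⁺¹)² − (cⁿ⁺¹)²) ), ρⁿ = ρⁿ⁺¹ + δx · 2uⁿ⁺¹(uⁿ⁺¹−xⁿ⁺¹) ρⁿ⁺¹ / ( xⁿ⁺¹ ((uⁿ⁺¹−xⁿ⁺¹)² − (cⁿ⁺¹)²) ) with (cⁿ⁺¹)² = γ s₁ (ρⁿ⁺¹)^{γ−1}: if 0 < uⁿ⁺¹ < xⁿ⁺¹, ρⁿ⁺¹ > 0, δx > 0, xⁿ⁺¹ > 0 and uⁿ⁺¹ + cⁿ⁺¹ > xⁿ⁺¹, then uⁿ ≥ uⁿ⁺¹ > 0 and ρⁿ ≥ ρⁿ⁺¹ > 0. -/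
theorem stmt_18 (γ s₁ δx x₁ u₁ ρ₁ c₁ u₀ ρ₀ : ℝ)
    (hγ : 1 < γ) (hs₁ : 0 < s₁) (hδx : 0 < δx) (hx : 0 < x₁)
    (hu : 0 < u₁) (hux : u₁ < x₁) (hρ : 0 < ρ₁)
    (hc : c₁ ^ 2 = γ * s₁ * ρ₁ ^ (γ - 1)) (hcpos : 0 < c₁)
    (hLax : x₁ < u₁ + c₁)
    (hu₀ : u₀ = u₁ - δx * (2 * c₁ ^ 2 * u₁ / (x₁ * ((u₁ - x₁) ^ 2 - c₁ ^ 2))))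
    (hρ₀ : ρ₀ = ρ₁ + δx * (2 * u₁ * (u₁ - x₁) * ρ₁ / (x₁ * ((u₁ - x₁) ^ 2 - c₁ ^ 2)))) :
    (u₁ ≤ u₀ ∧ 0 < u₁) ∧ (ρ₁ ≤ ρ₀ ∧ 0 < ρ₁) := by
  have hden : x₁ * ((u₁ - x₁) ^ 2 - c₁ ^ 2) < 0 := by nlinarith [mul_pos hx (mul_pos (show (0:ℝ) < u₁ - x₁ + c₁ by linarith) (show (0:ℝ) < c₁ - (u₁ - x₁) by linarith))]
  constructor
  · refine ⟨?_, hu⟩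
    have h1 : 2 * c₁ ^ 2 * u₁ / (x₁ * ((u₁ - x₁) ^ 2 - c₁ ^ 2)) ≤ 0 :=
      div_nonpos_of_nonneg_of_nonpos (by positivity) hden.le
    nlinarith [mul_nonpos_of_nonneg_of_nonpos hδx.le h1]
  · refine ⟨?_, hρ⟩
    have h1 : 0 ≤ 2 * u₁ * (u₁ - x₁) * ρ₁ / (x₁ * ((u₁ - x₁) ^ 2 - c₁ ^ 2)) := by
      rw [div_nonneg_iff]; right; exact ⟨by nlinarith [mul_pos hu hρ], hden.le⟩
    nlinarith [mul_nonneg hδx.le h1]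
end
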